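/- arXiv:1910.02280 — 9 statements merged into one kernel-verified Lean document; each statement's English description precedes it below -/
import Mathlib

section
/- Let (X,d) be a metric space, let S ⊆ X be a nonempty set, and let (y_k) be a sequence in X that is quasi-Fejér convergent to S. Then the sequence (y_k) is bounded. -/
/-! Fix `z ∈ S`. Telescoping the quasi-Fejér inequality gives
`d(y_k, z)² ≤ d(y_0, z)² + ∑_{i<k} ε_i`, and the partial sums of a convergent series are
bounded, so every `y_k` lies in one closed ball around `z`. -/

open Finset

theorem bddAbove_range_of_le_add_of_summable {a ε : ℕ → ℝ} (hε : Summable ε)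
    (h : ∀ k, a (k + 1) ≤ a k + ε k) : BddAbove (Set.range a) := by
  have h_partial : ∀ k, a k ≤ a 0 + ∑ i ∈ range k, ε i := by
    intro k
    induction k with
    | zero => simp
    | succ n ih => rw [sum_range_succ]; linarith [h n]
  obtain ⟨M, hM⟩ := hε.tendsto_sum_tsum_nat.bddAbove_range
  refine ⟨a 0 + M, ?_⟩
  rintro _ ⟨k, rfl⟩
  linarith [h_partial k, hM ⟨k, rfl⟩]

theorem Metric.isBounded_range_of_dist_sq_le {X ι : Type*} [PseudoMetricSpace X] {y : ι → X}
    {z : X} {C : ℝ} (h : ∀ k, dist (y k) z ^ 2 ≤ C) : Bornology.IsBounded (Set.range y) := by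
  refine (Metric.isBounded_closedBall (x := z) (r := Real.sqrt C)).subset ?_
  rintro _ ⟨k, rfl⟩
  exact Real.le_sqrt_of_sq_le (h k)

theorem stmt_1_general {X : Type*} [MetricSpace X] (S : Set X) (hS : S.Nonempty)
    (y : ℕ → X) (ε : ℕ → ℝ) (hsum : Summable ε)
    (hqf : ∀ k : ℕ, ∀ z ∈ S, dist (y (k + 1)) z ^ 2 ≤ dist (y k) z ^ 2 + ε k) :
    Bornology.IsBounded (Set.range y) := by
  obtain ⟨z, hz⟩ := hS
  obtain ⟨C, hC⟩ := bddAbove_range_of_le_add_of_summable (a := fun k => dist (y k) z ^ 2) hsum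
    fun k => hqf k z hz
  exact Metric.isBounded_range_of_dist_sq_le fun k => hC ⟨k, rfl⟩

theorem stmt_1 {X : Type*} [MetricSpace X] (S : Set X) (hS : S.Nonempty)
    (y : ℕ → X) (ε : ℕ → ℝ) (hε : ∀ k, 0 < ε k) (hsum : Summable ε)
    (hqf : ∀ k : ℕ, ∀ z ∈ S, dist (y (k + 1)) z ^ 2 ≤ dist (y k) z ^ 2 + ε k) :
    Bornology.IsBounded (Set.range y) :=
  stmt_1_general S hS y ε hsum hqf
end

section
/- Let (X,d) be a metric space, let S ⊆ X be a nonempty set, and let (y_k) be a sequence in X that is quasi-Fejér convergent to S. If (y_k) has a cluster point ȳ that belongs to S, then the whole sequence (y_k) converges to ȳ. -/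
open Filter Topology

/-- Adding the tail sums `∑_{j ≥ k} ε j` turns the quasi-decreasing sequence into an antitone one,
which then converges to the limit of any of its subsequences. -/
theorem tendsto_of_le_add_summable_of_tendsto_subseq {a ε : ℕ → ℝ} (hε : Summable ε)
    (ha : ∀ k, a (k + 1) ≤ a k + ε k) {φ : ℕ → ℕ} (hφ : Tendsto φ atTop atTop) {L : ℝ}
    (hL : Tendsto (a ∘ φ) atTop (𝓝 L)) : Tendsto a atTop (𝓝 L) := by
  set r : ℕ → ℝ := fun k => ∑' j, ε (j + k)
  have hr_succ : ∀ k, r k = ε k + r (k + 1) := fun k => by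
    simpa [r, add_right_comm, add_assoc] using ((summable_nat_add_iff k).2 hε).tsum_eq_zero_add
  have hr : Tendsto r atTop (𝓝 0) := tendsto_sum_nat_add ε
  have hb : Antitone (a + r) := antitone_nat_of_succ_le fun k => by
    simp only [Pi.add_apply]
    linarith [ha k, hr_succ k]
  have hbL : Tendsto (a + r) atTop (𝓝 L) := by
    rw [tendsto_iff_tendsto_subseq_of_antitone hb hφ]
    simpa [Function.comp_def] using hL.add (hr.comp hφ)
  simpa using hbL.sub hr

theorem stmt_2_general {X : Type*} [MetricSpace X] (S : Set X)
    (y : ℕ → X) (ε : ℕ → ℝ) (hsum : Summable ε)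
    (hqf : ∀ k : ℕ, ∀ z ∈ S, dist (y (k + 1)) z ^ 2 ≤ dist (y k) z ^ 2 + ε k)
    (ybar : X) (hybar : ybar ∈ S)
    (hcluster : ∃ φ : ℕ → ℕ, StrictMono φ ∧
      Filter.Tendsto (y ∘ φ) Filter.atTop (nhds ybar)) :
    Filter.Tendsto y Filter.atTop (nhds ybar) := by
  obtain ⟨φ, hφ, hyφ⟩ := hcluster
  have hsq : Tendsto (fun k => dist (y k) ybar ^ 2) atTop (𝓝 0) :=
    tendsto_of_le_add_summable_of_tendsto_subseq hsum (fun k => hqf k ybar hybar)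
      hφ.tendsto_atTop (by simpa [Function.comp_def] using (tendsto_iff_dist_tendsto_zero.1 hyφ).pow 2)
  rw [tendsto_iff_dist_tendsto_zero]
  simpa using hsq.sqrt

theorem stmt_2 {X : Type*} [MetricSpace X] (S : Set X) (hS : S.Nonempty)
    (y : ℕ → X) (ε : ℕ → ℝ) (hε : ∀ k, 0 < ε k) (hsum : Summable ε)
    (hqf : ∀ k : ℕ, ∀ z ∈ S, dist (y (k + 1)) z ^ 2 ≤ dist (y k) z ^ 2 + ε k)
    (ybar : X) (hybar : ybar ∈ S)
    (hcluster : ∃ φ : ℕ → ℕ, StrictMono φ ∧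
      Filter.Tendsto (y ∘ φ) Filter.atTop (nhds ybar)) :
    Filter.Tendsto y Filter.atTop (nhds ybar) :=
  stmt_2_general S y ε hsum hqf ybar hybar hcluster
end

section
/- Let E be a real Hilbert space, Q ⊆ E a convex set, and f : E → ℝ quasi-convex on Q. Suppose f is differentiable at a point x ∈ Q with gradient ∇f(x). Then for every t ≥ 0 and every z ∈ Q with f(z) ≤ f(x), one has ‖(x − t·∇f(x)) − z‖² ≤ ‖x − z‖² + t²‖∇f(x)‖². -/
/-!
Quasi-convexity makes the sublevel set `{f ≤ f x}` convex, so `f` attains its maximum on the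
segment `[x, z]` at `x`. The first-order condition at this maximum gives `⟪∇f(x), z - x⟫ ≤ 0`,
so the cross term in the expansion of `‖(x - z) - t • ∇f(x)‖²` is nonpositive.
-/

open scoped RealInnerProductSpace

theorem QuasiconvexOn.isMaxOn_segment {E β : Type*} [AddCommMonoid E] [Module ℝ E]
    [LinearOrder β] {s : Set E} {f : E → β} (hf : QuasiconvexOn ℝ s f) {x z : E}
    (hx : x ∈ s) (hz : z ∈ s) (hfz : f z ≤ f x) :
    IsMaxOn f (segment ℝ x z) x := fun _ hy =>
  ((hf (f x)).segment_subset ⟨hx, le_rfl⟩ ⟨hz, hfz⟩ hy).2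

theorem IsLocalMaxOn.inner_gradient_sub_nonpos {E : Type*} [NormedAddCommGroup E]
    [InnerProductSpace ℝ E] [CompleteSpace E] {f : E → ℝ} {x z g : E}
    (hmax : IsLocalMaxOn f (segment ℝ x z) x) (hg : HasGradientAt f g x) :
    ⟪g, z - x⟫ ≤ 0 := by
  simpa using hmax.hasFDerivWithinAt_nonpos hg.hasFDerivAt.hasFDerivWithinAt
    (sub_mem_posTangentConeAt_of_segment_subset subset_rfl)

theorem norm_sub_smul_sq_le_of_inner_nonneg {E : Type*} [NormedAddCommGroup E]
    [InnerProductSpace ℝ E] {v w : E} {t : ℝ} (ht : 0 ≤ t) (hvw : 0 ≤ ⟪w, v⟫) :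
    ‖v - t • w‖ ^ 2 ≤ ‖v‖ ^ 2 + t ^ 2 * ‖w‖ ^ 2 := by
  have hexpand : ‖v - t • w‖ ^ 2 = ‖v‖ ^ 2 - 2 * (t * ⟪w, v⟫) + t ^ 2 * ‖w‖ ^ 2 := by
    rw [norm_sub_sq_real, real_inner_smul_right, norm_smul, Real.norm_eq_abs, mul_pow, sq_abs,
      real_inner_comm]
  nlinarith [mul_nonneg ht hvw]

theorem stmt_7 {E : Type*} [NormedAddCommGroup E] [InnerProductSpace ℝ E]
    [CompleteSpace E]
    (Q : Set E) (hQ : Convex ℝ Q) (f : E → ℝ)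
    (hqc : ∀ x ∈ Q, ∀ y ∈ Q, ∀ t ∈ Set.Icc (0 : ℝ) 1,
      f (t • x + (1 - t) • y) ≤ max (f x) (f y))
    (x : E) (hx : x ∈ Q) (gx : E) (hgrad : HasGradientAt f gx x) :
    ∀ t : ℝ, 0 ≤ t → ∀ z ∈ Q, f z ≤ f x →
      ‖(x - t • gx) - z‖ ^ 2 ≤ ‖x - z‖ ^ 2 + t ^ 2 * ‖gx‖ ^ 2 := by
  intro t ht z hz hfz
  have hquasi : QuasiconvexOn ℝ Q f := quasiconvexOn_iff_le_max.2
    ⟨hQ, fun a ha b hb s u hs hu hsu => by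
      simpa [← hsu] using hqc a ha b hb s ⟨hs, by linarith⟩⟩
  have hdescent : ⟪gx, z - x⟫ ≤ 0 :=
    (hquasi.isMaxOn_segment hx hz hfz).localize.inner_gradient_sub_nonpos hgrad
  have hcross : 0 ≤ ⟪gx, x - z⟫ := by
    rw [← neg_sub, inner_neg_right]
    linarith
  rw [sub_right_comm]
  exact norm_sub_smul_sq_le_of_inner_nonneg ht hcross
end

section
/- Let E be a real Hilbert space and f : E → ℝ a convex function that is differentiable everywhere, with a global minimizer x̄, and set S̄ := {x ∈ E : f(x) = f(x̄)}. Suppose there is α > 0 such that α·dist(x, S̄)² ≤ f(x) − f(x̄) for every x ∈ E (quadratic growth / weak sharp minimum of order 2). Then ‖∇f(x)‖² ≥ α·(f(x) − f(x̄)) for every x ∈ E. -/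
/-!
By convexity, `f x - f z ≤ ⟪∇f x, x - z⟫ ≤ ‖∇f x‖ · ‖x - z‖` for every minimizer `z`, so
`c := f x - f x̄ ≤ ‖∇f x‖ · d` with `d := dist(x, S̄)`. Combined with the growth bound `α d² ≤ c`
this gives `α c² ≤ ‖∇f x‖² α d² ≤ ‖∇f x‖² c`, and dividing by `c` yields the claim.
-/

open Metric InnerProductSpace

theorem ConvexOn.apply_sub_le_sub_of_hasFDerivAt {E : Type*} [NormedAddCommGroup E]
    [NormedSpace ℝ E] {s : Set E} {f : E → ℝ} {f' : E →L[ℝ] ℝ} {x y : E}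
    (hf : ConvexOn ℝ s f) (hx : x ∈ s) (hy : y ∈ s) (hf' : HasFDerivAt f f' x) :
    f' (y - x) ≤ f y - f x := by
  set L : ℝ →ᵃ[ℝ] E := AffineMap.lineMap x y
  have hL0 : L 0 = x := AffineMap.lineMap_apply_zero x y
  have hL1 : L 1 = y := AffineMap.lineMap_apply_one x y
  have hfL : HasDerivAt (f ∘ L) (f' (y - x)) 0 :=
    (hL0 ▸ hf').comp_hasDerivAt 0 AffineMap.hasDerivAt_lineMap
  have := (hf.comp_affineMap L).le_slope_of_hasDerivAt (by simpa [hL0]) (by simpa [hL1])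
    one_pos hfL
  simpa [slope_def_field, hL0, hL1] using this

theorem ConvexOn.sub_le_norm_mul_dist_of_hasGradientAt {E : Type*} [NormedAddCommGroup E]
    [InnerProductSpace ℝ E] [CompleteSpace E] {s : Set E} {f : E → ℝ} {g x y : E}
    (hf : ConvexOn ℝ s f) (hx : x ∈ s) (hy : y ∈ s) (hg : HasGradientAt f g x) :
    f x - f y ≤ ‖g‖ * dist x y :=
  calc f x - f y ≤ ⟪g, x - y⟫_ℝ := by
        have := hf.apply_sub_le_sub_of_hasFDerivAt hx hy hg.hasFDerivAt
        rw [toDual_apply_apply, ← neg_sub x y, inner_neg_right] at this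
        linarith
    _ ≤ ‖g‖ * dist x y := (real_inner_le_norm g _).trans_eq (by rw [dist_eq_norm])

theorem Metric.le_mul_infDist {X : Type*} [PseudoMetricSpace X] {x : X} {s : Set X} {c G : ℝ}
    (hs : s.Nonempty) (hG : 0 ≤ G) (h : ∀ y ∈ s, c ≤ G * dist x y) :
    c ≤ G * infDist x s := by
  have : Nonempty s := hs.to_subtype
  rw [infDist_eq_iInf, Real.mul_iInf_of_nonneg hG]
  exact le_ciInf fun y => h y y.2

theorem mul_le_sq_of_le_mul_of_mul_sq_le {α c G d : ℝ} (hα : 0 ≤ α) (hcG : c ≤ G * d)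
    (hdc : α * d ^ 2 ≤ c) : α * c ≤ G ^ 2 := by
  have hc : 0 ≤ c := (by positivity : 0 ≤ α * d ^ 2).trans hdc
  rcases hc.eq_or_lt with rfl | hc
  · simpa using sq_nonneg G
  · have : α * c * c ≤ G ^ 2 * c :=
      calc α * c * c = α * c ^ 2 := by ring
        _ ≤ α * (G * d) ^ 2 := by gcongr
        _ = G ^ 2 * (α * d ^ 2) := by ring
        _ ≤ G ^ 2 * c := by gcongr
    exact le_of_mul_le_mul_right this hc

theorem stmt_9_general {E : Type*} [NormedAddCommGroup E] [InnerProductSpace ℝ E]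
    [CompleteSpace E]
    (f : E → ℝ) (hcvx : ConvexOn ℝ Set.univ f)
    (g : E → E) (hgrad : ∀ x, HasGradientAt f (g x) x)
    (xbar : E)
    (α : ℝ) (hα : 0 < α)
    (hgrowth : ∀ x : E,
      α * (Metric.infDist x {x' : E | f x' = f xbar}) ^ 2 ≤ f x - f xbar) :
    ∀ x : E, α * (f x - f xbar) ≤ ‖g x‖ ^ 2 := by
  intro x
  have herror : f x - f xbar ≤ ‖g x‖ * infDist x {x' | f x' = f xbar} :=
    le_mul_infDist ⟨xbar, rfl⟩ (norm_nonneg _) fun z (hz : f z = f xbar) =>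
      hz ▸ hcvx.sub_le_norm_mul_dist_of_hasGradientAt trivial trivial (hgrad x)
  exact mul_le_sq_of_le_mul_of_mul_sq_le hα.le herror (hgrowth x)

theorem stmt_9 {E : Type*} [NormedAddCommGroup E] [InnerProductSpace ℝ E]
    [CompleteSpace E]
    (f : E → ℝ) (hcvx : ConvexOn ℝ Set.univ f)
    (g : E → E) (hgrad : ∀ x, HasGradientAt f (g x) x)
    (xbar : E) (hmin : ∀ x, f xbar ≤ f x)
    (α : ℝ) (hα : 0 < α)
    (hgrowth : ∀ x : E,
      α * (Metric.infDist x {x' : E | f x' = f xbar}) ^ 2 ≤ f x - f xbar) :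
    ∀ x : E, α * (f x - f xbar) ≤ ‖g x‖ ^ 2 :=
  stmt_9_general f hcvx g hgrad xbar α hα hgrowth
end

section
/- Let (X,d) be a complete metric space, S ⊆ X a nonempty set, and (x_k) a sequence in X that is Fejér monotone with respect to S, i.e. d(x_{k+1}, z) ≤ d(x_k, z) for every k ∈ ℕ and every z ∈ S. Suppose there are C ≥ 0 and ρ ∈ (0,1) such that dist(x_k, S) ≤ C·ρ^k for every k ∈ ℕ. Then (x_k) converges to some point x* ∈ X, and d(x_k, x*) ≤ 2C·ρ^k for every k ∈ ℕ. -/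
/-!
Fejér monotonicity means that each `z ∈ S` is at least as close to `x k` as to every later
iterate, so by the triangle inequality `d(x m, x k) ≤ 2 d(x k, z)` for `k ≤ m`; taking the
infimum over `z` gives `d(x m, x k) ≤ 2 dist(x k, S)`. Hence a decaying distance to `S` makes
the sequence Cauchy, and passing to the limit in `m` bounds `d(x k, x*)` by `2 dist(x k, S)`.
-/

open Filter Metric Topology

section

variable {X : Type*} [PseudoMetricSpace X]

def FejerMonotone (x : ℕ → X) (S : Set X) : Prop :=
  ∀ z ∈ S, Antitone fun k ↦ dist (x k) z

namespace FejerMonotone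

variable {x : ℕ → X} {S : Set X}

theorem of_dist_succ_le (h : ∀ k, ∀ z ∈ S, dist (x (k + 1)) z ≤ dist (x k) z) :
    FejerMonotone x S :=
  fun z hz ↦ antitone_nat_of_succ_le fun k ↦ h k z hz

theorem dist_le_two_mul_infDist (hx : FejerMonotone x S) (hS : S.Nonempty) {k m : ℕ}
    (hkm : k ≤ m) : dist (x k) (x m) ≤ 2 * infDist (x k) S := by
  have : dist (x k) (x m) / 2 ≤ infDist (x k) S := (le_infDist hS).2 fun z hz ↦ by
    linarith [dist_triangle_right (x k) (x m) z, hx z hz hkm]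
  linarith

theorem cauchySeq (hx : FejerMonotone x S) (hS : S.Nonempty)
    (h : Tendsto (fun k ↦ infDist (x k) S) atTop (𝓝 0)) : CauchySeq x :=
  cauchySeq_of_le_tendsto_0' _ (fun _ _ ↦ hx.dist_le_two_mul_infDist hS)
    (by simpa using h.const_mul 2)

theorem dist_le_two_mul_infDist_of_tendsto (hx : FejerMonotone x S) (hS : S.Nonempty) {a : X}
    (ha : Tendsto x atTop (𝓝 a)) (k : ℕ) : dist (x k) a ≤ 2 * infDist (x k) S :=
  le_of_tendsto (tendsto_const_nhds.dist ha)
    (eventually_atTop.2 ⟨k, fun _ ↦ hx.dist_le_two_mul_infDist hS⟩)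

end FejerMonotone

end

theorem stmt_10_general {X : Type*} [MetricSpace X] [CompleteSpace X]
    (S : Set X) (hS : S.Nonempty) (x : ℕ → X)
    (hfejer : ∀ k : ℕ, ∀ z ∈ S, dist (x (k + 1)) z ≤ dist (x k) z)
    (C ρ : ℝ) (hρ : ρ ∈ Set.Ioo (0 : ℝ) 1)
    (hdist : ∀ k : ℕ, Metric.infDist (x k) S ≤ C * ρ ^ k) :
    ∃ xstar : X, Filter.Tendsto x Filter.atTop (nhds xstar) ∧
      ∀ k : ℕ, dist (x k) xstar ≤ 2 * C * ρ ^ k := by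
  have hx := FejerMonotone.of_dist_succ_le hfejer
  have hgeom : Tendsto (fun k ↦ C * ρ ^ k) atTop (𝓝 0) := by
    simpa using (tendsto_pow_atTop_nhds_zero_of_lt_one hρ.1.le hρ.2).const_mul C
  obtain ⟨xstar, hlim⟩ := cauchySeq_tendsto_of_complete <|
    hx.cauchySeq hS (squeeze_zero (fun _ ↦ infDist_nonneg) hdist hgeom)
  refine ⟨xstar, hlim, fun k ↦ ?_⟩
  linarith [hx.dist_le_two_mul_infDist_of_tendsto hS hlim k, hdist k]

theorem stmt_10 {X : Type*} [MetricSpace X] [CompleteSpace X]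
    (S : Set X) (hS : S.Nonempty) (x : ℕ → X)
    (hfejer : ∀ k : ℕ, ∀ z ∈ S, dist (x (k + 1)) z ≤ dist (x k) z)
    (C ρ : ℝ) (hC : 0 ≤ C) (hρ : ρ ∈ Set.Ioo (0 : ℝ) 1)
    (hdist : ∀ k : ℕ, Metric.infDist (x k) S ≤ C * ρ ^ k) :
    ∃ xstar : X, Filter.Tendsto x Filter.atTop (nhds xstar) ∧
      ∀ k : ℕ, dist (x k) xstar ≤ 2 * C * ρ ^ k :=
  stmt_10_general S hS x hfejer C ρ hρ hdist
end

section
/- Let (x_k) be generated by the gradient algorithm with parameter β ∈ (0,1), where each step size is the Armijo step size t_k := max{2^{-i} : i ∈ ℕ, f(x_k − 2^{-i}·∇f(x_k)) ≤ f(x_k) − β·2^{-i}·‖∇f(x_k)‖²}. Suppose (x_k) converges to a point x* ∈ E, and there exist δ > 0 and L > 0 such that f is differentiable on the ball B(x*, 3δ) and ‖∇f(x) − ∇f(y)‖ ≤ L·‖x − y‖ for all x, y ∈ B(x*, 3δ). Then inf_{k∈ℕ} t_k > 0. -/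
/-!
If `∇f` is `L`-Lipschitz on a convex set containing `y` and `y - s ∇f(y)`, the mean value
inequality gives `f(y - s ∇f(y)) ≤ f(y) - s (1 - L s) ‖∇f(y)‖²`, so every step `s ≤ (1 - β) / L`
passes the Armijo test. Once `x_k` is within `δ` of `x*`, the gradient is bounded by
`‖∇f(x*)‖ + L δ`, so all steps up to a fixed `T > 0` keep the segment inside `B(x*, 3δ)` and
pass the test; the backtracking therefore stops at some `t_k ≥ T / 2`, and the finitely many
earlier step sizes are positive.
-/

open Filter InnerProductSpace

theorem le_two_mul_of_forall_lt_pow_half {t T : ℝ} {i : ℕ} (ht : t = (1 / 2) ^ i) (hT : T ≤ 1)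
    (h : ∀ j : ℕ, t < (1 / 2) ^ j → T < (1 / 2) ^ j) : T ≤ 2 * t := by
  rcases i with _ | j
  · simp only [pow_zero] at ht
    linarith
  · have hj : (1 / 2 : ℝ) ^ j = 2 * t := by rw [ht, pow_succ]; ring
    have := h j (by rw [hj, ht]; linarith [pow_pos (one_half_pos (α := ℝ)) (j + 1)])
    linarith

theorem exists_pos_forall_le_of_eventually_le {t : ℕ → ℝ} (ht : ∀ k, 0 < t k) {a : ℝ}
    (ha : 0 < a) (h : ∀ᶠ k in atTop, a ≤ t k) : ∃ c, 0 < c ∧ ∀ k, c ≤ t k := by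
  obtain ⟨N, hN⟩ := eventually_atTop.1 h
  have hne : (Finset.range (N + 1)).Nonempty := Finset.nonempty_range_add_one
  refine ⟨min a ((Finset.range (N + 1)).inf' hne t),
    lt_min ha ((Finset.lt_inf'_iff hne).2 fun k _ => ht k), fun k => ?_⟩
  rcases lt_or_ge k N with hk | hk
  · exact (min_le_right _ _).trans (Finset.inf'_le _ (Finset.mem_range.2 (by omega)))
  · exact (min_le_left _ _).trans (hN k hk)

section

variable {E : Type*} [NormedAddCommGroup E] [InnerProductSpace ℝ E] [CompleteSpace E]

theorem le_add_inner_add_mul_norm_sq_of_gradient {f : E → ℝ} {g : E → E} {L : ℝ} {x y : E}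
    (hL : 0 ≤ L) (hf : ∀ z ∈ segment ℝ x y, HasGradientAt f (g z) z)
    (hg : ∀ z ∈ segment ℝ x y, ‖g z - g x‖ ≤ L * ‖z - x‖) :
    f y ≤ f x + ⟪g x, y - x⟫_ℝ + L * ‖y - x‖ ^ 2 := by
  have hmvt := (convex_segment x y).norm_image_sub_le_of_norm_hasFDerivWithin_le'
    (f' := fun z => toDual ℝ E (g z)) (φ := toDual ℝ E (g x)) (C := L * ‖y - x‖)
    (fun z hz => (hasGradientAt_iff_hasFDerivAt.1 (hf z hz)).hasFDerivWithinAt)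
    (fun z hz => by
      rw [← map_sub, LinearIsometryEquiv.norm_map]
      refine (hg z hz).trans (mul_le_mul_of_nonneg_left ?_ hL)
      have := dist_add_dist_of_mem_segment hz
      rw [← dist_eq_norm, ← dist_eq_norm, dist_comm z, dist_comm y]
      linarith [dist_nonneg (x := z) (y := y)])
    (left_mem_segment ℝ x y) (right_mem_segment ℝ x y)
  rw [toDual_apply_apply, Real.norm_eq_abs] at hmvt
  nlinarith [le_abs_self (f y - f x - ⟪g x, y - x⟫_ℝ)]

theorem armijo_condition_of_gradient {f : E → ℝ} {g : E → E} {L β s : ℝ} {x : E}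
    (hL : 0 ≤ L) (hs : 0 ≤ s) (hsL : s * L ≤ 1 - β)
    (hf : ∀ z ∈ segment ℝ x (x - s • g x), HasGradientAt f (g z) z)
    (hg : ∀ z ∈ segment ℝ x (x - s • g x), ‖g z - g x‖ ≤ L * ‖z - x‖) :
    f (x - s • g x) ≤ f x - β * s * ‖g x‖ ^ 2 := by
  have h := le_add_inner_add_mul_norm_sq_of_gradient hL hf hg
  rw [sub_sub_cancel_left, inner_neg_right, real_inner_smul_right, real_inner_self_eq_norm_sq,
    norm_neg, norm_smul, Real.norm_of_nonneg hs] at h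
  nlinarith [mul_le_mul_of_nonneg_right hsL (mul_nonneg hs (sq_nonneg ‖g x‖))]

open Metric in
theorem armijo_condition_of_mem_ball {f : E → ℝ} {g : E → E} {x₀ y : E} {δ L β s : ℝ}
    (hL : 0 ≤ L) (hdiff : ∀ z ∈ ball x₀ (3 * δ), HasGradientAt f (g z) z)
    (hLip : ∀ y ∈ ball x₀ (3 * δ), ∀ z ∈ ball x₀ (3 * δ), ‖g y - g z‖ ≤ L * ‖y - z‖)
    (hy : y ∈ ball x₀ δ) (hs : 0 ≤ s) (hsL : s * L ≤ 1 - β)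
    (hsδ : s * (‖g x₀‖ + L * δ) ≤ δ) :
    f (y - s • g y) ≤ f y - β * s * ‖g y‖ ^ 2 := by
  have hδ : 0 < δ := pos_of_mem_ball hy
  have hy₃ : y ∈ ball x₀ (3 * δ) := ball_subset_ball (by linarith) hy
  have hgy : ‖g y‖ ≤ ‖g x₀‖ + L * δ := calc
    ‖g y‖ ≤ ‖g x₀‖ + ‖g y - g x₀‖ := norm_le_insert' _ _
    _ ≤ ‖g x₀‖ + L * δ := by
      gcongr
      exact (hLip y hy₃ x₀ (mem_ball_self (by linarith))).trans
        (mul_le_mul_of_nonneg_left (mem_ball_iff_norm.1 hy).le hL)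
  have hstep : y - s • g y ∈ ball x₀ (3 * δ) := by
    rw [mem_ball_iff_norm] at hy ⊢
    calc ‖y - s • g y - x₀‖ = ‖(y - x₀) - s • g y‖ := by rw [sub_right_comm]
      _ ≤ ‖y - x₀‖ + ‖s • g y‖ := norm_sub_le _ _
      _ = ‖y - x₀‖ + s * ‖g y‖ := by rw [norm_smul, Real.norm_of_nonneg hs]
      _ < 3 * δ := by nlinarith
  have hseg := (convex_ball x₀ (3 * δ)).segment_subset hy₃ hstep
  exact armijo_condition_of_gradient hL hs hsL (fun z hz => hdiff z (hseg hz))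
    (fun z hz => hLip z (hseg hz) y hy₃)

end

theorem stmt_11_general {E : Type*} [NormedAddCommGroup E] [InnerProductSpace ℝ E]
    [CompleteSpace E]
    (f : E → ℝ) (β : ℝ) (hβ : β ∈ Set.Ioo (0 : ℝ) 1)
    (x : ℕ → E) (g : E → E) (t : ℕ → ℝ)
    -- t k is the Armijo step size: the largest power 2^{-i} satisfying the decrease test
    (hArmijo : ∀ k, ∃ i : ℕ, t k = (1 / 2 : ℝ) ^ i ∧
      f (x k - t k • g (x k)) ≤ f (x k) - β * t k * ‖g (x k)‖ ^ 2 ∧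
      ∀ j : ℕ, t k < (1 / 2 : ℝ) ^ j →
        ¬ f (x k - (1 / 2 : ℝ) ^ j • g (x k))
            ≤ f (x k) - β * (1 / 2 : ℝ) ^ j * ‖g (x k)‖ ^ 2)
    (xstar : E) (hconv : Filter.Tendsto x Filter.atTop (nhds xstar))
    (δ L : ℝ) (hδ : 0 < δ) (hL : 0 < L)
    (hdiff : ∀ y ∈ Metric.ball xstar (3 * δ), HasGradientAt f (g y) y)
    (hLip : ∀ y ∈ Metric.ball xstar (3 * δ), ∀ z ∈ Metric.ball xstar (3 * δ),
      ‖g y - g z‖ ≤ L * ‖y - z‖) :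
    ∃ c : ℝ, 0 < c ∧ ∀ k, c ≤ t k := by
  have hM : 0 < ‖g xstar‖ + L * δ := by positivity
  set T := min 1 (min ((1 - β) / L) (δ / (‖g xstar‖ + L * δ)))
  have hT : 0 < T := lt_min one_pos (lt_min (div_pos (by linarith [hβ.2]) hL) (div_pos hδ hM))
  have hTL : T ≤ (1 - β) / L := (min_le_right _ _).trans (min_le_left _ _)
  have hTM : T ≤ δ / (‖g xstar‖ + L * δ) := (min_le_right _ _).trans (min_le_right _ _)
  have hlow : ∀ᶠ k in atTop, T / 2 ≤ t k := by
    filter_upwards [hconv (Metric.ball_mem_nhds xstar hδ)] with k hk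
    obtain ⟨i, hi, -, hmax⟩ := hArmijo k
    have := le_two_mul_of_forall_lt_pow_half hi (min_le_left _ _) fun j hj =>
      lt_of_not_ge fun hjT => hmax j hj <| armijo_condition_of_mem_ball hL.le hdiff hLip hk
        (by positivity) ((le_div_iff₀ hL).1 (hjT.trans hTL)) ((le_div_iff₀ hM).1 (hjT.trans hTM))
    linarith
  refine exists_pos_forall_le_of_eventually_le (fun k => ?_) (half_pos hT) hlow
  obtain ⟨i, hi, -⟩ := hArmijo k
  rw [hi]
  positivity

theorem stmt_11 {E : Type*} [NormedAddCommGroup E] [InnerProductSpace ℝ E]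
    [CompleteSpace E]
    (f : E → ℝ) (β : ℝ) (hβ : β ∈ Set.Ioo (0 : ℝ) 1)
    (x : ℕ → E) (g : E → E) (t : ℕ → ℝ)
    (hgradk : ∀ k, HasGradientAt f (g (x k)) (x k))
    (hstep : ∀ k, x (k + 1) = x k - t k • g (x k))
    -- t k is the Armijo step size: the largest power 2^{-i} satisfying the decrease test
    (hArmijo : ∀ k, ∃ i : ℕ, t k = (1 / 2 : ℝ) ^ i ∧
      f (x k - t k • g (x k)) ≤ f (x k) - β * t k * ‖g (x k)‖ ^ 2 ∧
      ∀ j : ℕ, t k < (1 / 2 : ℝ) ^ j →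
        ¬ f (x k - (1 / 2 : ℝ) ^ j • g (x k))
            ≤ f (x k) - β * (1 / 2 : ℝ) ^ j * ‖g (x k)‖ ^ 2)
    (xstar : E) (hconv : Filter.Tendsto x Filter.atTop (nhds xstar))
    (δ L : ℝ) (hδ : 0 < δ) (hL : 0 < L)
    (hdiff : ∀ y ∈ Metric.ball xstar (3 * δ), HasGradientAt f (g y) y)
    (hLip : ∀ y ∈ Metric.ball xstar (3 * δ), ∀ z ∈ Metric.ball xstar (3 * δ),
      ‖g y - g z‖ ≤ L * ‖y - z‖) :
    ∃ c : ℝ, 0 < c ∧ ∀ k, c ≤ t k :=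
  stmt_11_general f β hβ x g t hArmijo xstar hconv δ L hδ hL hdiff hLip
end

section
/- Let (x_k) be generated by the gradient algorithm with parameters β ∈ (0,1) and R ≥ 1, where f : E → ℝ is locally Lipschitz and bounded below. Suppose (x_k) has a cluster point x̄ ∈ E such that: f is differentiable on a neighborhood of x̄, ∇f(x̄) = 0, the gradient map x ↦ ∇f(x) is continuous at x̄, and f is quasi-convex on the closed ball B(x̄, r) for some r > 0. Then the whole sequence (x_k) converges to x̄. -/
/-!
Near `xbar` the iterates move towards `xbar`: if `f xbar ≤ f y` and `y` is close to `xbar`,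
quasi-convexity keeps `f` below `f y` on the segment `[y, xbar]`, so `⟪∇f y, xbar - y⟫ ≤ 0`.
Since `f (x k)` decreases to `f xbar` along the subsequence, this applies to every iterate near
`xbar`, and then `‖x (k+1) - xbar‖² ≤ ‖x k - xbar‖² + ‖x (k+1) - x k‖²`. Sufficient decrease
and boundedness below make the squared step lengths summable, so once an iterate is close enough
to `xbar` and the remaining steps have small total squared length, the sequence never leaves a
small ball around `xbar`.
-/

open Filter Topology Metric Set Finset
open scoped RealInnerProductSpace

theorem summable_of_le_mul_sub_succ {a d : ℕ → ℝ} {c : ℝ} (hc : 0 ≤ c) (hd : ∀ k, 0 ≤ d k)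
    (hle : ∀ k, d k ≤ c * (a k - a (k + 1))) (ha : BddBelow (range a)) : Summable d := by
  obtain ⟨B, hB⟩ := ha
  refine summable_of_sum_range_le hd (c := c * (a 0 - B)) fun n => ?_
  calc ∑ k ∈ range n, d k ≤ ∑ k ∈ range n, c * (a k - a (k + 1)) := sum_le_sum fun k _ => hle k
    _ = c * (a 0 - a n) := by rw [← mul_sum, sum_range_sub']
    _ ≤ c * (a 0 - B) := by gcongr; exact hB (mem_range_self n)

theorem Antitone.le_of_mapClusterPt {α : Type*} [TopologicalSpace α] [Preorder α]
    [ClosedIicTopology α] {u : ℕ → α} {a : α} (hu : Antitone u) (ha : MapClusterPt a atTop u)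
    (k : ℕ) : a ≤ u k :=
  isClosed_Iic.mem_of_mapClusterPt ha (eventually_atTop.2 ⟨k, fun _ hn => hu hn⟩)

theorem QuasiconvexOn.hasFDerivAt_sub_nonpos {E : Type*} [NormedAddCommGroup E]
    [NormedSpace ℝ E] {s : Set E} {f : E → ℝ} {f' : E →L[ℝ] ℝ} {y z : E}
    (hf : QuasiconvexOn ℝ s f) (hy : y ∈ s) (hz : z ∈ s) (hfz : f z ≤ f y)
    (hd : HasFDerivAt f f' y) : f' (z - y) ≤ 0 := by
  have hseg : segment ℝ y z ⊆ {w ∈ s | f w ≤ f y} :=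
    (hf (f y)).segment_subset ⟨hy, le_rfl⟩ ⟨hz, hfz⟩
  have hmax : IsMaxOn f (segment ℝ y z) y := fun w hw => (hseg hw).2
  exact hmax.localize.hasFDerivWithinAt_nonpos hd.hasFDerivWithinAt
    (sub_mem_posTangentConeAt_of_segment_subset subset_rfl)

theorem QuasiconvexOn.inner_sub_nonpos_of_hasGradientAt {E : Type*} [NormedAddCommGroup E]
    [InnerProductSpace ℝ E] [CompleteSpace E] {s : Set E} {f : E → ℝ} {g y z : E}
    (hf : QuasiconvexOn ℝ s f) (hy : y ∈ s) (hz : z ∈ s) (hfz : f z ≤ f y)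
    (hd : HasGradientAt f g y) : ⟪g, z - y⟫ ≤ 0 := by
  simpa only [InnerProductSpace.toDual_apply_apply] using
    hf.hasFDerivAt_sub_nonpos hy hz hfz hd.hasFDerivAt

theorem norm_sub_sq_le_of_inner_nonneg {E : Type*} [NormedAddCommGroup E]
    [InnerProductSpace ℝ E] {u v : E} (h : 0 ≤ ⟪u, v⟫) : ‖u - v‖ ^ 2 ≤ ‖u‖ ^ 2 + ‖v‖ ^ 2 := by
  rw [norm_sub_sq_real]
  linarith

section SufficientDecrease

variable {E : Type*} [NormedAddCommGroup E] {f : E → ℝ} {β R : ℝ}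
  {x d : ℕ → E} {t : ℕ → ℝ}

theorem antitone_of_sufficient_decrease (hβ : 0 < β) (ht : ∀ k, 0 < t k)
    (hdec : ∀ k, f (x (k + 1)) ≤ f (x k) - β * t k * ‖d k‖ ^ 2) : Antitone (f ∘ x) :=
  antitone_nat_of_succ_le fun k => by
    have hdecr : 0 ≤ β * t k * ‖d k‖ ^ 2 := by have := ht k; positivity
    simpa only [Function.comp_apply] using (hdec k).trans (sub_le_self _ hdecr)

theorem summable_sq_norm_sub_of_sufficient_decrease [NormedSpace ℝ E]
    (hbdd : BddBelow (range f)) (hβ : 0 < β) (ht : ∀ k, t k ∈ Ioc 0 R)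
    (hstep : ∀ k, x (k + 1) = x k - t k • d k)
    (hdec : ∀ k, f (x (k + 1)) ≤ f (x k) - β * t k * ‖d k‖ ^ 2) :
    Summable fun k => ‖x (k + 1) - x k‖ ^ 2 := by
  have hR : 0 < R := (ht 0).1.trans_le (ht 0).2
  refine summable_of_le_mul_sub_succ (a := f ∘ x) (div_nonneg hR.le hβ.le)
    (fun _ => by positivity) (fun k => ?_) (hbdd.mono (range_comp_subset_range x f))
  obtain ⟨htk, htR⟩ := ht k
  have hnorm : ‖x (k + 1) - x k‖ ^ 2 = t k * (t k * ‖d k‖ ^ 2) := by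
    rw [hstep k, sub_sub_cancel_left, norm_neg, norm_smul, Real.norm_of_nonneg htk.le]
    ring
  rw [hnorm, Function.comp_apply, Function.comp_apply, div_mul_eq_mul_div, le_div_iff₀ hβ]
  have hdecr : 0 ≤ β * t k * ‖d k‖ ^ 2 := by positivity
  calc t k * (t k * ‖d k‖ ^ 2) * β = t k * (β * t k * ‖d k‖ ^ 2) := by ring
    _ ≤ R * (β * t k * ‖d k‖ ^ 2) := mul_le_mul_of_nonneg_right htR hdecr
    _ ≤ R * (f (x k) - f (x (k + 1))) := by gcongr; linarith [hdec k]

end SufficientDecrease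

theorem eventually_forall_sum_Ico_lt {e : ℕ → ℝ} (he : ∀ k, 0 ≤ e k) (hs : Summable e)
    {η : ℝ} (hη : 0 < η) : ∀ᶠ m in atTop, ∀ n, ∑ i ∈ Ico m n, e i < η := by
  filter_upwards [(tendsto_sum_nat_add e).eventually (gt_mem_nhds hη)] with m hm n
  calc ∑ i ∈ Ico m n, e i = ∑ i ∈ range (n - m), e (i + m) := by
        rw [sum_Ico_eq_sum_range]; simp only [add_comm]
    _ ≤ ∑' i, e (i + m) :=
        ((summable_nat_add_iff m).2 hs).sum_le_tsum _ fun i _ => he (i + m)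
    _ < η := hm

theorem tendsto_of_mapClusterPt_of_sq_dist_succ_le {X : Type*} [PseudoMetricSpace X]
    {x : ℕ → X} {p : X} {ρ : ℝ} {e : ℕ → ℝ} (he : ∀ k, 0 ≤ e k) (hs : Summable e) (hρ : 0 < ρ)
    (hp : MapClusterPt p atTop x)
    (hfejer : ∀ k, dist (x k) p < ρ → dist (x (k + 1)) p ^ 2 ≤ dist (x k) p ^ 2 + e k) :
    Tendsto x atTop (𝓝 p) := by
  rw [Metric.tendsto_atTop]
  intro δ hδ
  set ε := min δ ρ
  have hε : 0 < ε := lt_min hδ hρ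
  obtain ⟨k₀, hk₀, htail⟩ := ((hp.frequently (ball_mem_nhds p (half_pos hε))).and_eventually
    (eventually_forall_sum_Ico_lt he hs (by positivity : 0 < ε ^ 2 / 2))).exists
  have hsmall : ∀ n, dist (x n) p ^ 2 ≤ dist (x k₀) p ^ 2 + ∑ i ∈ Ico k₀ n, e i →
      dist (x n) p < ε := fun n hn => by
    have := htail n
    have : dist (x k₀) p ^ 2 < ε ^ 2 / 4 := by
      nlinarith [mem_ball.1 hk₀, dist_nonneg (x := x k₀) (y := p)]
    exact lt_of_pow_lt_pow_left₀ 2 hε.le (by nlinarith)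
  have hbound : ∀ n, k₀ ≤ n → dist (x n) p ^ 2 ≤ dist (x k₀) p ^ 2 + ∑ i ∈ Ico k₀ n, e i := by
    intro n hn
    induction n, hn using Nat.le_induction with
    | base => simp
    | succ m hm ih =>
      have := hfejer m ((hsmall m ih).trans_le (min_le_right _ _))
      rw [sum_Ico_succ_top hm]
      linarith
  exact ⟨k₀, fun n hn => (hsmall n (hbound n hn)).trans_le (min_le_left _ _)⟩

theorem stmt_13_general {E : Type*} [NormedAddCommGroup E] [InnerProductSpace ℝ E]
    [CompleteSpace E]
    (f : E → ℝ) (hbdd : BddBelow (Set.range f))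
    (β R : ℝ) (hβ : β ∈ Set.Ioo (0 : ℝ) 1)
    (x : ℕ → E) (g : E → E) (t : ℕ → ℝ)
    (ht : ∀ k, t k ∈ Set.Ioc (0 : ℝ) R)
    (hstep : ∀ k, x (k + 1) = x k - t k • g (x k))
    (hdec : ∀ k, f (x (k + 1)) ≤ f (x k) - β * t k * ‖g (x k)‖ ^ 2)
    (xbar : E)
    (hcluster : ∃ φ : ℕ → ℕ, StrictMono φ ∧
      Filter.Tendsto (x ∘ φ) Filter.atTop (nhds xbar))
    (hdiff : ∃ ε : ℝ, 0 < ε ∧ ∀ y ∈ Metric.ball xbar ε, HasGradientAt f (g y) y)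
    (r : ℝ) (hr : 0 < r)
    (hqc : ∀ y ∈ Metric.closedBall xbar r, ∀ z ∈ Metric.closedBall xbar r,
      ∀ s ∈ Set.Icc (0 : ℝ) 1, f (s • y + (1 - s) • z) ≤ max (f y) (f z)) :
    Filter.Tendsto x Filter.atTop (nhds xbar) := by
  obtain ⟨φ, hφ, hxφ⟩ := hcluster
  obtain ⟨ε, hε, hgrad⟩ := hdiff
  have hclus : MapClusterPt xbar atTop x := hxφ.mapClusterPt.of_comp hφ.tendsto_atTop
  have hquasi : QuasiconvexOn ℝ (closedBall xbar r) f := by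
    refine quasiconvexOn_iff_le_max.2 ⟨convex_closedBall _ _, fun y hy z hz a b ha hb hab => ?_⟩
    obtain rfl := eq_sub_of_add_eq' hab
    exact hqc y hy z hz a ⟨ha, by linarith⟩
  have hmin : ∀ k, f xbar ≤ f (x k) :=
    (antitone_of_sufficient_decrease hβ.1 (fun k => (ht k).1) hdec).le_of_mapClusterPt
      (hclus.tendsto_comp (hgrad xbar (mem_ball_self hε)).continuousAt)
  refine tendsto_of_mapClusterPt_of_sq_dist_succ_le (fun _ => sq_nonneg _)
    (summable_sq_norm_sub_of_sufficient_decrease hbdd hβ.1 ht hstep hdec) (lt_min hr hε) hclus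
    fun k hk => ?_
  obtain ⟨hkr, hkε⟩ := lt_min_iff.1 hk
  have hinner : ⟪g (x k), xbar - x k⟫ ≤ 0 :=
    hquasi.inner_sub_nonpos_of_hasGradientAt hkr.le (mem_closedBall_self hr.le) (hmin k)
      (hgrad _ hkε)
  simp only [dist_eq_norm, hstep k, sub_right_comm _ _ xbar, sub_sub_cancel_left, norm_neg]
  refine norm_sub_sq_le_of_inner_nonneg ?_
  rw [real_inner_smul_right, real_inner_comm, ← neg_sub, inner_neg_right]
  exact mul_nonneg (ht k).1.le (neg_nonneg.2 hinner)

theorem stmt_13 {E : Type*} [NormedAddCommGroup E] [InnerProductSpace ℝ E]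
    [CompleteSpace E]
    (f : E → ℝ) (hlip : LocallyLipschitz f) (hbdd : BddBelow (Set.range f))
    (β R : ℝ) (hβ : β ∈ Set.Ioo (0 : ℝ) 1) (hR : 1 ≤ R)
    (x : ℕ → E) (g : E → E) (t : ℕ → ℝ)
    (hgradk : ∀ k, HasGradientAt f (g (x k)) (x k))
    (ht : ∀ k, t k ∈ Set.Ioc (0 : ℝ) R)
    (hstep : ∀ k, x (k + 1) = x k - t k • g (x k))
    (hdec : ∀ k, f (x (k + 1)) ≤ f (x k) - β * t k * ‖g (x k)‖ ^ 2)
    (xbar : E)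
    (hcluster : ∃ φ : ℕ → ℕ, StrictMono φ ∧
      Filter.Tendsto (x ∘ φ) Filter.atTop (nhds xbar))
    (hdiff : ∃ ε : ℝ, 0 < ε ∧ ∀ y ∈ Metric.ball xbar ε, HasGradientAt f (g y) y)
    (hcrit : g xbar = 0)
    (hcont : ContinuousAt g xbar)
    (r : ℝ) (hr : 0 < r)
    (hqc : ∀ y ∈ Metric.closedBall xbar r, ∀ z ∈ Metric.closedBall xbar r,
      ∀ s ∈ Set.Icc (0 : ℝ) 1, f (s • y + (1 - s) • z) ≤ max (f y) (f z)) :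
    Filter.Tendsto x Filter.atTop (nhds xbar) :=
  stmt_13_general f hbdd β R hβ x g t ht hstep hdec xbar hcluster hdiff r hr hqc
end

section
/- Let (x_k) be generated by the gradient algorithm with parameters β ∈ (1/2, 1) and R ≥ 1, where f : E → ℝ is locally Lipschitz and bounded below, and suppose inf_{k∈ℕ} t_k > 0. Suppose (x_k) has a cluster point x̄ ∈ E such that: f is differentiable on a neighborhood of x̄, ∇f(x̄) = 0, the gradient map x ↦ ∇f(x) is continuous at x̄, f is convex on the closed ball B(x̄, r) for some r > 0, and x̄ is a local weak sharp minimizer of order 2 for f. Then (x_k) converges linearly to x̄: there exist μ > 0 and ρ ∈ (0,1) such that ‖x_k − x̄‖ ≤ μ·ρ^k for every k ∈ ℕ. -/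
/-!
Near `xbar`, convexity and the weak sharp minimum combine into a Polyak–Łojasiewicz
inequality `α (f y - f xbar) ≤ ‖∇f y‖²`: the gradient inequality bounds the gap
`f y - f xbar` by `‖∇f y‖ · dist(y, S̄)`, and sharpness bounds `α · dist(y, S̄)²` by the gap.
Hence, while the iterates stay near `xbar`, sufficient decrease with steps `t k ≥ c`
contracts the gap by `q = 1 - βcα`, and each step has length
`t k ‖∇f‖ ≤ (R / √(βc)) √gap`, geometric with ratio `√q`. Starting from an iterate of the
subsequence that is close to `xbar` with a small gap, the summed future steps never leave
the neighbourhood, so the decay persists: the sequence is Cauchy, converges to its cluster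
point `xbar`, and the tail sums give the rate.
-/

open Filter Metric Real Set
open scoped Topology RealInnerProductSpace

theorem ConvexOn.inner_gradient_le_sub {E : Type*} [NormedAddCommGroup E]
    [InnerProductSpace ℝ E] [CompleteSpace E] {s : Set E} {f : E → ℝ} (hf : ConvexOn ℝ s f)
    {a z g : E} (ha : a ∈ s) (hz : z ∈ s) (hg : HasGradientAt f g a) : ⟪g, z - a⟫ ≤ f z - f a := by
  let ℓ : ℝ →ᵃ[ℝ] E := AffineMap.lineMap a z
  have hderiv : HasDerivAt (f ∘ ℓ) ⟪g, z - a⟫ 0 := by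
    have hg' : HasFDerivAt f (InnerProductSpace.toDual ℝ E g) (ℓ 0) := by
      simpa [ℓ] using hg.hasFDerivAt
    simpa using hg'.comp_hasDerivAt (0 : ℝ) AffineMap.hasDerivAt_lineMap
  simpa [slope_def_field, ℓ] using
    (hf.comp_affineMap ℓ).le_slope_of_hasDerivAt (x := 0) (y := 1)
      (by simpa [ℓ]) (by simpa [ℓ]) one_pos hderiv

theorem le_mul_infDist_of_forall_near {X : Type*} [PseudoMetricSpace X] {S : Set X} {y : X}
    {a b ρ : ℝ} (hS : S.Nonempty) (hb : 0 ≤ b) (hρ : infDist y S < ρ)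
    (h : ∀ z ∈ S, dist y z < ρ → a ≤ b * dist y z) : a ≤ b * infDist y S := by
  have hlim : Tendsto (b * ·) (𝓝[>] (infDist y S)) (𝓝 (b * infDist y S)) :=
    ((continuous_const_mul b).tendsto _).mono_left nhdsWithin_le_nhds
  refine ge_of_tendsto hlim ?_
  filter_upwards [Ioo_mem_nhdsGT hρ] with d hd
  obtain ⟨z, hzS, hzd⟩ := (infDist_lt_iff hS).1 hd.1
  exact (h z hzS (hzd.trans hd.2)).trans (mul_le_mul_of_nonneg_left hzd.le hb)

section ConvexNearLevelSet

variable {E : Type*} [NormedAddCommGroup E] [InnerProductSpace ℝ E] [CompleteSpace E]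
  {f : E → ℝ} {a y g : E} {r : ℝ}

theorem ConvexOn.sub_le_norm_mul_infDist (hf : ConvexOn ℝ (closedBall a r) f)
    (hy : dist y a < r / 2) (hg : HasGradientAt f g y) :
    f y - f a ≤ ‖g‖ * infDist y {z | f z = f a} := by
  refine le_mul_infDist_of_forall_near ⟨a, rfl⟩ (norm_nonneg g)
    ((infDist_le_dist_of_mem (show a ∈ {z | f z = f a} from rfl)).trans_lt hy)
    fun z hz hyz => ?_
  have hya : y ∈ closedBall a r := mem_closedBall.2 (by linarith [dist_nonneg (x := y) (y := a)])
  have hza : z ∈ closedBall a r :=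
    mem_closedBall.2 (by linarith [dist_triangle_left z a y])
  have hcvx := hf.inner_gradient_le_sub hya hza hg
  rw [hz, ← neg_sub, inner_neg_right] at hcvx
  rw [dist_eq_norm]
  linarith [real_inner_le_norm g (y - z)]

theorem ConvexOn.mul_sub_le_norm_sq_of_weakSharp (hf : ConvexOn ℝ (closedBall a r) f) {α : ℝ}
    (hα : 0 ≤ α) (hsharp : α * infDist y {z | f z = f a} ^ 2 ≤ f y - f a)
    (hy : dist y a < r / 2) (hg : HasGradientAt f g y) : α * (f y - f a) ≤ ‖g‖ ^ 2 := by
  have hbound := hf.sub_le_norm_mul_infDist hy hg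
  set d := infDist y {z | f z = f a}
  set D := f y - f a
  have hD : 0 ≤ D := (mul_nonneg hα (sq_nonneg d)).trans hsharp
  rcases hD.eq_or_lt with hD0 | hDpos
  · rw [← hD0, mul_zero]; positivity
  refine le_of_mul_le_mul_right ?_ hDpos
  calc α * D * D = α * D ^ 2 := by ring
    _ ≤ α * (‖g‖ * d) ^ 2 := by gcongr
    _ = ‖g‖ ^ 2 * (α * d ^ 2) := by ring
    _ ≤ ‖g‖ ^ 2 * D := by gcongr

end ConvexNearLevelSet

section SufficientDecrease

variable {E : Type*} [SeminormedAddCommGroup E]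
  {f : E → ℝ} {g : E → E} {x : ℕ → E} {t : ℕ → ℝ} {β c R m : ℝ} {k : ℕ}

theorem antitone_comp_of_sufficient_decrease (hβ : 0 ≤ β) (ht : ∀ k, 0 ≤ t k)
    (hdec : ∀ k, f (x (k + 1)) ≤ f (x k) - β * t k * ‖g (x k)‖ ^ 2) : Antitone (f ∘ x) :=
  antitone_nat_of_succ_le fun k =>
    (hdec k).trans (sub_le_self _ (by have := ht k; positivity))

theorem mul_norm_sq_le_sub_of_sufficient_decrease (hβ : 0 ≤ β) (hct : c ≤ t k)
    (hdec : f (x (k + 1)) ≤ f (x k) - β * t k * ‖g (x k)‖ ^ 2) :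
    β * c * ‖g (x k)‖ ^ 2 ≤ f (x k) - f (x (k + 1)) := by
  have : β * c * ‖g (x k)‖ ^ 2 ≤ β * t k * ‖g (x k)‖ ^ 2 := by gcongr
  linarith

theorem dist_succ_le_of_sufficient_decrease [NormedSpace ℝ E] (hβ : 0 < β) (hc : 0 < c)
    (hct : c ≤ t k) (htR : t k ∈ Ioc 0 R) (hstep : x (k + 1) = x k - t k • g (x k))
    (hdec : f (x (k + 1)) ≤ f (x k) - β * t k * ‖g (x k)‖ ^ 2) (hm : m ≤ f (x (k + 1))) :
    dist (x k) (x (k + 1)) ≤ R / √(β * c) * √(f (x k) - m) := by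
  have hgap := mul_norm_sq_le_sub_of_sufficient_decrease hβ.le hct hdec
  have hβc : 0 < √(β * c) := by positivity
  have hg : √(β * c) * ‖g (x k)‖ ≤ √(f (x k) - m) := by
    rw [← Real.sqrt_sq (norm_nonneg (g (x k))), ← Real.sqrt_mul (by positivity)]
    exact Real.sqrt_le_sqrt (by linarith)
  calc dist (x k) (x (k + 1)) = t k * ‖g (x k)‖ := by
        rw [hstep, dist_eq_norm, sub_sub_cancel, norm_smul, norm_of_nonneg htR.1.le]
    _ ≤ R * (√(f (x k) - m) / √(β * c)) :=
        mul_le_mul htR.2 ((le_div_iff₀' hβc).2 hg) (norm_nonneg _) (htR.1.le.trans htR.2)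
    _ = R / √(β * c) * √(f (x k) - m) := by ring

theorem sub_succ_le_mul_of_sufficient_decrease (hβ : 0 ≤ β) (hc : 0 ≤ c) (hct : c ≤ t k)
    (hdec : f (x (k + 1)) ≤ f (x k) - β * t k * ‖g (x k)‖ ^ 2) {α q : ℝ}
    (hPL : α * (f (x k) - m) ≤ ‖g (x k)‖ ^ 2) (hq : 1 - β * c * α ≤ q) (hm : m ≤ f (x k)) :
    f (x (k + 1)) - m ≤ q * (f (x k) - m) := by
  have hgap := mul_norm_sq_le_sub_of_sufficient_decrease hβ hct hdec
  have : β * c * (α * (f (x k) - m)) ≤ β * c * ‖g (x k)‖ ^ 2 := by gcongr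
  nlinarith

end SufficientDecrease

section GeometricTrap

variable {X : Type*} [PseudoMetricSpace X] {x : ℕ → X} {D : ℕ → ℝ} {a : X} {δ q L : ℝ}

theorem sqrt_le_mul_pow_of_trapped (hq0 : 0 ≤ q) (hq1 : q < 1) (hL : 0 ≤ L)
    (hstep : ∀ k, dist (x k) (x (k + 1)) ≤ L * √(D k))
    (hcontr : ∀ k, dist (x k) a ≤ δ → D (k + 1) ≤ q * D k)
    (hstart : dist (x 0) a + L * √(D 0) / (1 - √q) ≤ δ) (n : ℕ) :
    √(D n) ≤ √(D 0) * √q ^ n := by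
  have hsqrt : √q < 1 := (Real.sqrt_lt' one_pos).2 (by linarith)
  suffices ∀ n, ∀ j ≤ n, √(D j) ≤ √(D 0) * √q ^ j from this n n le_rfl
  intro n
  induction n with
  | zero => intro j hj; simp [Nat.le_zero.1 hj]
  | succ n ih =>
    have hnear : dist (x n) a ≤ δ := by
      have hsum : dist (x 0) (x n) ≤ L * √(D 0) / (1 - √q) := calc
        dist (x 0) (x n) ≤ ∑ j ∈ Finset.range n, L * √(D 0) * √q ^ j :=
          (dist_le_range_sum_dist x n).trans <| Finset.sum_le_sum fun j hj =>
            (hstep j).trans <| by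
              rw [mul_assoc]
              exact mul_le_mul_of_nonneg_left (ih j (Finset.mem_range.1 hj).le) hL
        _ = L * √(D 0) * ∑ j ∈ Finset.Ico 0 n, √q ^ j := by
          rw [Finset.mul_sum, Finset.range_eq_Ico]
        _ ≤ L * √(D 0) * (√q ^ 0 / (1 - √q)) := by
          gcongr; exact geom_sum_Ico_le_of_lt_one (Real.sqrt_nonneg q) hsqrt
        _ = L * √(D 0) / (1 - √q) := by ring
      linarith [dist_triangle_left (x n) a (x 0)]
    intro j hj
    rcases Nat.le_succ_iff.1 hj with hj | rfl
    · exact ih j hj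
    calc √(D (n + 1)) ≤ √(q * D n) := Real.sqrt_le_sqrt (hcontr n hnear)
      _ = √q * √(D n) := Real.sqrt_mul hq0 _
      _ ≤ √q * (√(D 0) * √q ^ n) := by gcongr; exact ih n le_rfl
      _ = √(D 0) * √q ^ (n + 1) := by ring

theorem dist_le_geometric_of_trapped (hq0 : 0 ≤ q) (hq1 : q < 1) (hL : 0 ≤ L)
    (hstep : ∀ k, dist (x k) (x (k + 1)) ≤ L * √(D k))
    (hcontr : ∀ k, dist (x k) a ≤ δ → D (k + 1) ≤ q * D k) (K : ℕ)
    (hstart : dist (x K) a + L * √(D K) / (1 - √q) ≤ δ)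
    {φ : ℕ → ℕ} (hφ : StrictMono φ) (hxφ : Tendsto (x ∘ φ) atTop (𝓝 a)) (n : ℕ) :
    dist (x (n + K)) a ≤ L * √(D K) / (1 - √q) * √q ^ n := by
  have hsqrt : √q < 1 := (Real.sqrt_lt' one_pos).2 (by linarith)
  have hgeom : ∀ n, dist (x (n + K)) (x (n + 1 + K)) ≤ L * √(D K) * √q ^ n := fun n => by
    rw [Nat.add_right_comm, mul_assoc]
    refine (hstep _).trans (mul_le_mul_of_nonneg_left ?_ hL)
    simpa using sqrt_le_mul_pow_of_trapped (x := fun n => x (n + K)) (D := fun n => D (n + K))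
      hq0 hq1 hL
      (fun k => by simpa only [Nat.add_right_comm] using hstep (k + K))
      (fun k => by simpa only [Nat.add_right_comm] using hcontr (k + K))
      (by simpa using hstart) n
  have hlim : Tendsto x atTop (𝓝 a) :=
    tendsto_nhds_of_cauchySeq_of_subseq
      ((cauchySeq_shift K).1 (cauchySeq_of_le_geometric _ _ hsqrt hgeom)) hφ.tendsto_atTop hxφ
  exact (dist_le_of_le_geometric_of_tendsto _ _ hsqrt hgeom
    ((tendsto_add_atTop_iff_nat K).2 hlim) n).trans_eq (mul_div_right_comm _ _ _)

end GeometricTrap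

theorem exists_pos_forall_le_mul_pow_of_shift {u : ℕ → ℝ} {ρ C : ℝ} (hρ : 0 < ρ) (K : ℕ)
    (hu : ∀ n, 0 ≤ u n) (h : ∀ n, u (n + K) ≤ C * ρ ^ n) :
    ∃ μ, 0 < μ ∧ ∀ n, u n ≤ μ * ρ ^ n := by
  have hO : u =O[cofinite] (ρ ^ ·) := by
    rw [Nat.cofinite_eq_atTop]
    refine Asymptotics.IsBigO.of_bound (C / ρ ^ K) ?_
    filter_upwards [eventually_ge_atTop K] with n hn
    obtain ⟨j, rfl⟩ := Nat.exists_eq_add_of_le' hn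
    rw [norm_of_nonneg (hu _), norm_of_nonneg (by positivity), pow_add, div_mul_eq_mul_div,
      mul_div_assoc, mul_div_cancel_right₀ _ (pow_ne_zero K hρ.ne')]
    exact h j
  obtain ⟨μ, hμ⟩ := (Asymptotics.isBigO_cofinite_iff fun n hn => absurd hn (by positivity)).1 hO
  refine ⟨max μ 1, by positivity, fun n => ?_⟩
  calc u n ≤ μ * ρ ^ n := by simpa [norm_of_nonneg (hu n), abs_of_pos hρ] using hμ n
    _ ≤ max μ 1 * ρ ^ n := by gcongr; exact le_max_left _ _

theorem stmt_14_general {E : Type*} [NormedAddCommGroup E] [InnerProductSpace ℝ E]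
    [CompleteSpace E]
    (f : E → ℝ) (hlip : LocallyLipschitz f)
    (β R : ℝ) (hβ : β ∈ Set.Ioo (1 / 2 : ℝ) 1) (hR : 1 ≤ R)
    (x : ℕ → E) (g : E → E) (t : ℕ → ℝ)
    (hgradk : ∀ k, HasGradientAt f (g (x k)) (x k))
    (ht : ∀ k, t k ∈ Set.Ioc (0 : ℝ) R)
    (hstep : ∀ k, x (k + 1) = x k - t k • g (x k))
    (hdec : ∀ k, f (x (k + 1)) ≤ f (x k) - β * t k * ‖g (x k)‖ ^ 2)
    (hlow : ∃ c : ℝ, 0 < c ∧ ∀ k, c ≤ t k)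
    (xbar : E)
    (hcluster : ∃ φ : ℕ → ℕ, StrictMono φ ∧
      Filter.Tendsto (x ∘ φ) Filter.atTop (nhds xbar))
    (r : ℝ) (hr : 0 < r)
    (hcvx : ConvexOn ℝ (Metric.closedBall xbar r) f)
    -- xbar is a local weak sharp minimizer of order 2 for f
    (hwsm : ∃ δ α : ℝ, 0 < δ ∧ 0 < α ∧
      ∀ y ∈ Metric.closedBall xbar δ,
        α * (Metric.infDist y {x' : E | f x' = f xbar}) ^ 2 ≤ f y - f xbar) :
    ∃ μ : ℝ, 0 < μ ∧ ∃ ρ ∈ Set.Ioo (0 : ℝ) 1,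
      ∀ k : ℕ, ‖x k - xbar‖ ≤ μ * ρ ^ k := by
  obtain ⟨c, hc, hct⟩ := hlow
  obtain ⟨φ, hφ, hxφ⟩ := hcluster
  obtain ⟨δ, α, hδ, hα, hsharp⟩ := hwsm
  have hβ0 : 0 < β := by linarith [hβ.1]
  have hfφ : Tendsto (f ∘ x ∘ φ) atTop (𝓝 (f xbar)) :=
    (hlip.continuous.tendsto xbar).comp hxφ
  have hanti := antitone_comp_of_sufficient_decrease hβ0.le (fun k => (ht k).1.le) hdec
  have hmin : ∀ k, f xbar ≤ f (x k) := fun k =>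
    ((hanti.comp_monotone hφ.monotone).le_of_tendsto hfφ k).trans (hanti (hφ.id_le k))
  set q := max (1 / 2 : ℝ) (1 - β * c * α)
  have hq0 : 0 < q := lt_max_of_lt_left (by norm_num)
  have hq1 : q < 1 := max_lt (by norm_num) (by nlinarith [mul_pos (mul_pos hβ0 hc) hα])
  set δ₁ := min δ (r / 4)
  have hδ₁ : 0 < δ₁ := lt_min hδ (by linarith)
  have hcontr (k : ℕ) (hk : dist (x k) xbar ≤ δ₁) :
      f (x (k + 1)) - f xbar ≤ q * (f (x k) - f xbar) :=
    sub_succ_le_mul_of_sufficient_decrease hβ0.le hc.le (hct k) (hdec k)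
      (hcvx.mul_sub_le_norm_sq_of_weakSharp hα.le
        (hsharp _ (mem_closedBall.2 (hk.trans (min_le_left _ _))))
        (by linarith [min_le_right δ (r / 4)]) (hgradk k))
      (le_max_right _ _) (hmin k)
  set L := R / √(β * c)
  have hnear : Tendsto (fun j => dist (x (φ j)) xbar + L * √(f (x (φ j)) - f xbar) / (1 - √q))
      atTop (𝓝 0) := by
    simpa using (hxφ.dist (tendsto_const_nhds (x := xbar))).add
      (((hfφ.sub_const (f xbar)).sqrt.const_mul L).div_const (1 - √q))
  obtain ⟨j, hj⟩ := (hnear.eventually (ge_mem_nhds hδ₁)).exists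
  obtain ⟨μ, hμ, hbound⟩ := exists_pos_forall_le_mul_pow_of_shift (Real.sqrt_pos.2 hq0) (φ j)
    (fun n => dist_nonneg) (dist_le_geometric_of_trapped hq0.le hq1
      (div_nonneg (by linarith) (Real.sqrt_nonneg _))
      (fun k => dist_succ_le_of_sufficient_decrease hβ0 hc (hct k) (ht k) (hstep k) (hdec k)
        (hmin _)) hcontr (φ j) hj hφ hxφ)
  exact ⟨μ, hμ, √q, ⟨Real.sqrt_pos.2 hq0, (Real.sqrt_lt' one_pos).2 (by linarith)⟩,
    fun k => by simpa [dist_eq_norm] using hbound k⟩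

theorem stmt_14 {E : Type*} [NormedAddCommGroup E] [InnerProductSpace ℝ E]
    [CompleteSpace E]
    (f : E → ℝ) (hlip : LocallyLipschitz f) (hbdd : BddBelow (Set.range f))
    (β R : ℝ) (hβ : β ∈ Set.Ioo (1 / 2 : ℝ) 1) (hR : 1 ≤ R)
    (x : ℕ → E) (g : E → E) (t : ℕ → ℝ)
    (hgradk : ∀ k, HasGradientAt f (g (x k)) (x k))
    (ht : ∀ k, t k ∈ Set.Ioc (0 : ℝ) R)
    (hstep : ∀ k, x (k + 1) = x k - t k • g (x k))
    (hdec : ∀ k, f (x (k + 1)) ≤ f (x k) - β * t k * ‖g (x k)‖ ^ 2)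
    (hlow : ∃ c : ℝ, 0 < c ∧ ∀ k, c ≤ t k)
    (xbar : E)
    (hcluster : ∃ φ : ℕ → ℕ, StrictMono φ ∧
      Filter.Tendsto (x ∘ φ) Filter.atTop (nhds xbar))
    (hdiff : ∃ ε : ℝ, 0 < ε ∧ ∀ y ∈ Metric.ball xbar ε, HasGradientAt f (g y) y)
    (hcrit : g xbar = 0)
    (hcont : ContinuousAt g xbar)
    (r : ℝ) (hr : 0 < r)
    (hcvx : ConvexOn ℝ (Metric.closedBall xbar r) f)
    -- xbar is a local weak sharp minimizer of order 2 for f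
    (hwsm : ∃ δ α : ℝ, 0 < δ ∧ 0 < α ∧
      ∀ y ∈ Metric.closedBall xbar δ,
        α * (Metric.infDist y {x' : E | f x' = f xbar}) ^ 2 ≤ f y - f xbar) :
    ∃ μ : ℝ, 0 < μ ∧ ∃ ρ ∈ Set.Ioo (0 : ℝ) 1,
      ∀ k : ℕ, ‖x k - xbar‖ ≤ μ * ρ ^ k :=
  stmt_14_general f hlip β R hβ hR x g t hgradk ht hstep hdec hlow xbar hcluster r hr hcvx hwsm
end

section
/- Let E be a finite-dimensional real inner product space, N ≥ 2, let y_1, …, y_N ∈ E be points that are not colinear (i.e. there do not exist a, v ∈ E such that every y_i lies on the line {a + t·v : t ∈ ℝ}), and let w_1, …, w_N be positive weights with ∑_{i=1}^N w_i = 1. Then the function f_1(x) := ∑_{i=1}^N w_i·‖x − y_i‖ has exactly one global minimizer on E. -/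
/-!
Existence: `x ↦ ∑ wᵢ ‖x - yᵢ‖` is continuous and grows like `‖x‖` at infinity, so it attains its
minimum. Uniqueness: the midpoint `m` of two minimizers `a ≠ b` is again a minimizer, so every
triangle inequality `‖m - yᵢ‖ ≤ (‖a - yᵢ‖ + ‖b - yᵢ‖) / 2` is an equality. In a strictly convex
space this forces `a - yᵢ` and `b - yᵢ` onto a common ray, hence `yᵢ` onto the line through
`a` and `b`, contradicting non-colinearity.
-/

open Filter Finset

theorem mem_affineSpan_pair_of_sameRay_vsub {R V P : Type*} [Field R] [LinearOrder R]
    [IsStrictOrderedRing R] [AddCommGroup V] [Module R V] [AddTorsor V P] {a b p : P}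
    (hab : a ≠ b) (h : SameRay R (a -ᵥ p) (b -ᵥ p)) : p ∈ line[R, a, b] := by
  have hcol : Collinear R ({p, a, b} : Set P) := by
    rcases wbtw_total_of_sameRay_vsub_left h with h | h
    · exact h.collinear
    · rw [Set.pair_comm]
      exact h.collinear
  exact hcol.mem_affineSpan_of_mem_of_ne (by simp) (by simp) (by simp) hab

section Midpoint

variable {E : Type*} [NormedAddCommGroup E] [NormedSpace ℝ E]

theorem norm_midpoint_sub (a b p : E) :
    ‖midpoint ℝ a b - p‖ = ‖(a - p) + (b - p)‖ / 2 := by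
  rw [← vsub_eq_sub, midpoint_vsub, ← smul_add, norm_smul]
  simp [div_eq_inv_mul]

theorem norm_midpoint_sub_le (a b p : E) :
    ‖midpoint ℝ a b - p‖ ≤ (‖a - p‖ + ‖b - p‖) / 2 := by
  rw [norm_midpoint_sub]
  gcongr
  exact norm_add_le _ _

theorem norm_midpoint_sub_eq_iff [StrictConvexSpace ℝ E] {a b p : E} :
    ‖midpoint ℝ a b - p‖ = (‖a - p‖ + ‖b - p‖) / 2 ↔ SameRay ℝ (a - p) (b - p) := by
  rw [norm_midpoint_sub, sameRay_iff_norm_add, div_left_inj' two_ne_zero]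

end Midpoint

section WeightedDistSum

variable {ι E : Type*} [Fintype ι] [NormedAddCommGroup E]

def weightedDistSum (w : ι → ℝ) (y : ι → E) (x : E) : ℝ := ∑ i, w i * ‖x - y i‖

variable {w : ι → ℝ} {y : ι → E}

theorem continuous_weightedDistSum : Continuous (weightedDistSum w y) := by
  unfold weightedDistSum
  fun_prop

theorem sub_le_weightedDistSum (hw : ∀ i, 0 ≤ w i) (x : E) :
    (∑ i, w i) * ‖x‖ - ∑ i, w i * ‖y i‖ ≤ weightedDistSum w y x := by
  rw [sum_mul, ← sum_sub_distrib]
  refine sum_le_sum fun i _ => ?_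
  rw [← mul_sub]
  exact mul_le_mul_of_nonneg_left (norm_sub_norm_le x (y i)) (hw i)

theorem tendsto_weightedDistSum_cocompact [ProperSpace E] (hw : ∀ i, 0 ≤ w i)
    (hw₀ : 0 < ∑ i, w i) : Tendsto (weightedDistSum w y) (cocompact E) atTop :=
  tendsto_atTop_mono (sub_le_weightedDistSum hw) <| tendsto_atTop_add_const_right _ _ <|
    tendsto_norm_cocompact_atTop.const_mul_atTop hw₀

theorem exists_forall_weightedDistSum_le [ProperSpace E] (hw : ∀ i, 0 ≤ w i)
    (hw₀ : 0 < ∑ i, w i) : ∃ a : E, ∀ z, weightedDistSum w y a ≤ weightedDistSum w y z :=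
  continuous_weightedDistSum.exists_forall_le (tendsto_weightedDistSum_cocompact hw hw₀)

theorem sameRay_of_forall_weightedDistSum_le [NormedSpace ℝ E] [StrictConvexSpace ℝ E]
    (hw : ∀ i, 0 < w i) {a b : E} (ha : ∀ z, weightedDistSum w y a ≤ weightedDistSum w y z)
    (hb : ∀ z, weightedDistSum w y b ≤ weightedDistSum w y z) (i : ι) :
    SameRay ℝ (a - y i) (b - y i) := by
  set m := midpoint ℝ a b
  have hle : ∀ i ∈ univ, w i * ‖m - y i‖ ≤ w i * ((‖a - y i‖ + ‖b - y i‖) / 2) :=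
    fun i _ => mul_le_mul_of_nonneg_left (norm_midpoint_sub_le a b (y i)) (hw i).le
  have havg : ∑ i, w i * ((‖a - y i‖ + ‖b - y i‖) / 2) =
      (weightedDistSum w y a + weightedDistSum w y b) / 2 := by
    rw [weightedDistSum, weightedDistSum, ← sum_add_distrib, sum_div]
    exact sum_congr rfl fun i _ => by ring
  have hm : weightedDistSum w y m = ∑ i, w i * ((‖a - y i‖ + ‖b - y i‖) / 2) := by
    refine le_antisymm (sum_le_sum hle) ?_
    linarith [ha b, hb a, ha m]
  have hterm := (sum_eq_sum_iff_of_le hle).1 hm i (mem_univ i)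
  exact norm_midpoint_sub_eq_iff.1 (mul_left_cancel₀ (hw i).ne' hterm)

end WeightedDistSum

theorem stmt_15_general {E : Type*} [NormedAddCommGroup E] [InnerProductSpace ℝ E]
    [FiniteDimensional ℝ E]
    (N : ℕ) (y : Fin N → E)
    (hnc : ¬ ∃ a v : E, ∀ i : Fin N, ∃ s : ℝ, y i = a + s • v)
    (w : Fin N → ℝ) (hw : ∀ i, 0 < w i) (hw1 : ∑ i, w i = 1) :
    ∃! xbar : E, ∀ z : E,
      (∑ i, w i * ‖xbar - y i‖) ≤ ∑ i, w i * ‖z - y i‖ := by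
  obtain ⟨a, ha⟩ := exists_forall_weightedDistSum_le (y := y) (fun i => (hw i).le)
    (hw1 ▸ one_pos)
  refine ⟨a, ha, fun b hb => ?_⟩
  by_contra hba
  refine hnc ⟨a, b - a, fun i => ?_⟩
  have hline := mem_affineSpan_pair_of_sameRay_vsub (Ne.symm hba)
    (sameRay_of_forall_weightedDistSum_le hw ha hb i)
  obtain ⟨s, hs⟩ := mem_affineSpan_pair_iff_exists_lineMap_eq.1 hline
  exact ⟨s, by rw [← hs, AffineMap.lineMap_apply_module', add_comm]⟩

theorem stmt_15 {E : Type*} [NormedAddCommGroup E] [InnerProductSpace ℝ E]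
    [FiniteDimensional ℝ E]
    (N : ℕ) (hN : 2 ≤ N) (y : Fin N → E)
    (hnc : ¬ ∃ a v : E, ∀ i : Fin N, ∃ s : ℝ, y i = a + s • v)
    (w : Fin N → ℝ) (hw : ∀ i, 0 < w i) (hw1 : ∑ i, w i = 1) :
    ∃! xbar : E, ∀ z : E,
      (∑ i, w i * ‖xbar - y i‖) ≤ ∑ i, w i * ‖z - y i‖ :=
  stmt_15_general N y hnc w hw hw1
end
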